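/- Let γ : [0, 2π) → ℝ², γ(ρ) = s + r(ρ)(cos ρ, sin ρ) with r : ℝ → (0, ∞) continuous and 2π-periodic. Then γ is injective, and the image of γ is the boundary of the star-shaped set S = {s + t(cos ρ, sin ρ) : ρ ∈ [0, 2π), 0 ≤ t ≤ r(ρ)}, which is star-shaped with reference point s. -/

import Mathlib

/-!
Lift `r` to a continuous positive function `R` on the circle `Real.Angle`. In polar coordinates
about `s` (computed in `ℂ`, with the angle read in `Real.Angle`), a point `p` lies in `S` iff
`|p - s| ≤ R (angle (p - s))`. As an element of `Real.Angle` the angle depends continuously on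
`p ≠ s`, so near such points both strict inequalities are open conditions: this makes `S` closed
and every point with strict inequality interior. The centre `s` is interior because `R` has a
positive minimum on the compact circle. Hence the frontier of `S` is the locus of equality, which
is the curve.
-/

open Real Set Topology Filter

namespace Real.Angle

noncomputable def unitVec (θ : Angle) : ℝ × ℝ := (θ.cos, θ.sin)

@[simp]
theorem unitVec_coe (x : ℝ) : unitVec x = (Real.cos x, Real.sin x) := by
  simp [unitVec]

local instance : Fact (0 < 2 * π) := ⟨two_pi_pos⟩

instance : CompactSpace Angle := AddCircle.compactSpace (2 * π)

theorem coe_image_Ico : ((↑) : ℝ → Angle) '' Ico 0 (2 * π) = univ := by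
  have := AddCircle.coe_image_Ico_eq (2 * π) (0 : ℝ)
  rwa [zero_add] at this

theorem injOn_coe_Ico : InjOn ((↑) : ℝ → Angle) (Ico 0 (2 * π)) := fun x hx y hy =>
  (AddCircle.coe_eq_coe_iff_of_mem_Ico (a := 0) (by simpa using hx) (by simpa using hy)).mp

end Real.Angle

open Real.Angle

noncomputable def polarRadius (v : ℝ × ℝ) : ℝ := ‖Complex.equivRealProd.symm v‖

noncomputable def polarAngle (v : ℝ × ℝ) : Angle := (Complex.equivRealProd.symm v).arg

theorem equivRealProd_symm_smul_unitVec (t : ℝ) (θ : Angle) :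
    Complex.equivRealProd.symm (t • θ.unitVec) = t * (θ.cos + θ.sin * Complex.I) := by
  apply Complex.ext <;> simp [unitVec]

theorem polarRadius_smul_unitVec {t : ℝ} (ht : 0 ≤ t) (θ : Angle) :
    polarRadius (t • θ.unitVec) = t := by
  induction θ using Real.Angle.induction_on with
  | h x =>
    rw [polarRadius, equivRealProd_symm_smul_unitVec, cos_coe, sin_coe, Complex.ofReal_cos,
      Complex.ofReal_sin, norm_mul, Complex.norm_cos_add_sin_mul_I, mul_one, Complex.norm_real,
      Real.norm_of_nonneg ht]

theorem polarAngle_smul_unitVec {t : ℝ} (ht : 0 < t) (θ : Angle) :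
    polarAngle (t • θ.unitVec) = θ := by
  rw [polarAngle, equivRealProd_symm_smul_unitVec, Complex.arg_mul_cos_add_sin_mul_I_coe_angle ht]

theorem polarRadius_smul_unitVec_polarAngle (v : ℝ × ℝ) :
    polarRadius v • (polarAngle v).unitVec = v := by
  apply Complex.equivRealProd.symm.injective
  rw [equivRealProd_symm_smul_unitVec, polarRadius, polarAngle, cos_coe, sin_coe,
    Complex.ofReal_cos, Complex.ofReal_sin, Complex.norm_mul_cos_add_sin_mul_I]

theorem continuous_polarRadius : Continuous polarRadius :=
  continuous_norm.comp Complex.equivRealProdCLM.symm.continuous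

theorem continuousAt_polarAngle_sub {p s : ℝ × ℝ} (hps : p ≠ s) :
    ContinuousAt (fun q => polarAngle (q - s)) p := by
  have hz : Complex.equivRealProd.symm (p - s) ≠ 0 :=
    Complex.equivRealProdAddHom.symm.map_ne_zero_iff.mpr (sub_ne_zero.mpr hps)
  exact (Complex.continuousAt_arg_coe_angle hz).comp
    (f := fun q => Complex.equivRealProd.symm (q - s))
    (Complex.equivRealProdCLM.symm.continuous.comp (continuous_sub_right s)).continuousAt

def polarRegion (s : ℝ × ℝ) (R : Angle → ℝ) : Set (ℝ × ℝ) :=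
  {p | ∃ θ t, 0 ≤ t ∧ t ≤ R θ ∧ p = s + t • θ.unitVec}

noncomputable def polarCurve (s : ℝ × ℝ) (R : Angle → ℝ) (θ : Angle) : ℝ × ℝ :=
  s + R θ • θ.unitVec

section polarRegion

variable {s : ℝ × ℝ} {R : Angle → ℝ}

theorem starConvex_polarRegion (s : ℝ × ℝ) (R : Angle → ℝ) :
    StarConvex ℝ s (polarRegion s R) := by
  rintro _ ⟨θ, t, ht, htR, rfl⟩ a b ha hb hab
  refine ⟨θ, b * t, mul_nonneg hb ht, (mul_le_of_le_one_left ht (by linarith)).trans htR, ?_⟩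
  rw [smul_add, ← add_assoc, ← add_smul, hab, one_smul, smul_smul]

theorem mem_polarRegion_iff (hR : ∀ θ, 0 ≤ R θ) {p : ℝ × ℝ} :
    p ∈ polarRegion s R ↔ polarRadius (p - s) ≤ R (polarAngle (p - s)) := by
  constructor
  · rintro ⟨θ, t, ht, htR, rfl⟩
    rw [add_sub_cancel_left]
    rcases ht.eq_or_lt with rfl | ht
    · simpa [polarRadius] using hR _
    · rwa [polarRadius_smul_unitVec ht.le, polarAngle_smul_unitVec ht]
  · intro h
    refine ⟨polarAngle (p - s), polarRadius (p - s), norm_nonneg _, h, ?_⟩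
    rw [polarRadius_smul_unitVec_polarAngle, add_sub_cancel]

theorem isClosed_polarRegion (hR : Continuous R) (hR0 : ∀ θ, 0 ≤ R θ) :
    IsClosed (polarRegion s R) := by
  refine isOpen_compl_iff.mp (isOpen_iff_mem_nhds.mpr fun p hp => ?_)
  have hps : p ≠ s := by
    rintro rfl
    exact hp ((mem_polarRegion_iff hR0).mpr (by simpa [polarRadius] using hR0 _))
  have hcont : ContinuousAt (fun q => R (polarAngle (q - s))) p :=
    hR.continuousAt.comp (continuousAt_polarAngle_sub hps)
  have hfar := hcont.eventually_lt
    (continuous_polarRadius.comp (continuous_sub_right s)).continuousAt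
    (not_le.mp (mt (mem_polarRegion_iff hR0).mpr hp))
  filter_upwards [hfar] with q hq
  exact mt (mem_polarRegion_iff hR0).mp (not_le.mpr hq)

theorem mem_interior_polarRegion (hR : Continuous R) (hpos : ∀ θ, 0 < R θ) {p : ℝ × ℝ}
    (hp : polarRadius (p - s) < R (polarAngle (p - s))) : p ∈ interior (polarRegion s R) := by
  have hR0 θ := (hpos θ).le
  have hradius : Continuous fun q => polarRadius (q - s) :=
    continuous_polarRadius.comp (continuous_sub_right s)
  rw [mem_interior_iff_mem_nhds]
  by_cases hps : p = s
  · subst hps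
    obtain ⟨θ₀, -, hθ₀⟩ := isCompact_univ.exists_isMinOn univ_nonempty hR.continuousOn
    have hnear : ∀ᶠ q in 𝓝 p, polarRadius (q - p) < R θ₀ :=
      hradius.continuousAt.eventually_lt continuousAt_const
        (by simpa [polarRadius] using hpos θ₀)
    filter_upwards [hnear] with q hq
    exact (mem_polarRegion_iff hR0).mpr (hq.le.trans (isMinOn_univ_iff.mp hθ₀ _))
  · have hcont : ContinuousAt (fun q => R (polarAngle (q - s))) p :=
      hR.continuousAt.comp (continuousAt_polarAngle_sub hps)
    filter_upwards [hradius.continuousAt.eventually_lt hcont hp] with q hq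
    exact (mem_polarRegion_iff hR0).mpr hq.le

theorem polarCurve_injective (hpos : ∀ θ, 0 < R θ) : Function.Injective (polarCurve s R) := by
  intro θ ψ h
  simpa [polarCurve, polarAngle_smul_unitVec (hpos _)] using
    congrArg (fun p => polarAngle (p - s)) h

theorem frontier_polarRegion (hR : Continuous R) (hpos : ∀ θ, 0 < R θ) :
    frontier (polarRegion s R) = range (polarCurve s R) := by
  have hR0 θ := (hpos θ).le
  rw [(isClosed_polarRegion hR hR0).frontier_eq]
  apply Subset.antisymm
  · rintro p ⟨hpS, hpi⟩
    have heq : polarRadius (p - s) = R (polarAngle (p - s)) :=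
      ((mem_polarRegion_iff hR0).mp hpS).antisymm
        (not_lt.mp fun h => hpi (mem_interior_polarRegion hR hpos h))
    refine ⟨polarAngle (p - s), ?_⟩
    rw [polarCurve, ← heq, polarRadius_smul_unitVec_polarAngle, add_sub_cancel]
  · rintro _ ⟨θ, rfl⟩
    refine ⟨(mem_polarRegion_iff hR0).mpr ?_, fun hint => ?_⟩
    · rw [polarCurve, add_sub_cancel_left, polarRadius_smul_unitVec (hR0 θ),
        polarAngle_smul_unitVec (hpos θ)]
    · have hray :
          Tendsto (fun t : ℝ => s + t • θ.unitVec) (𝓝[>] (R θ)) (𝓝 (polarCurve s R θ)) :=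
        ((continuous_const.add (continuous_id.smul continuous_const)).tendsto _).mono_left
          nhdsWithin_le_nhds
      obtain ⟨t, htS, ht⟩ := ((hray.eventually (mem_interior_iff_mem_nhds.mp hint)).and
        self_mem_nhdsWithin).exists
      have ht0 : 0 < t := (hpos θ).trans ht
      have := (mem_polarRegion_iff hR0).mp htS
      rw [add_sub_cancel_left, polarRadius_smul_unitVec ht0.le,
        polarAngle_smul_unitVec ht0] at this
      exact absurd ht (not_lt.mpr this)

end polarRegion

open Real in
theorem polar_curve_boundary_starShaped (s : ℝ × ℝ) (r : ℝ → ℝ)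
    (hr : Continuous r) (hrpos : ∀ ρ, 0 < r ρ)
    (hper : ∀ ρ, r (ρ + 2 * π) = r ρ)
    (γ : ℝ → ℝ × ℝ) (hγ : γ = fun ρ => s + r ρ • (Real.cos ρ, Real.sin ρ)) :
    ∀ S : Set (ℝ × ℝ),
      S = {p | ∃ ρ ∈ Set.Ico 0 (2 * π), ∃ t, 0 ≤ t ∧ t ≤ r ρ ∧
                p = s + t • (Real.cos ρ, Real.sin ρ)} →
      Set.InjOn γ (Set.Ico 0 (2 * π)) ∧
      γ '' Set.Ico 0 (2 * π) = frontier S ∧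
      StarConvex ℝ s S := by
  intro S hS
  let R : Angle → ℝ := Function.Periodic.lift (c := 2 * π) hper
  have hR : Continuous R := hr.quotient_lift _
  have hRpos : ∀ θ, 0 < R θ := fun θ => Real.Angle.induction_on θ hrpos
  have hRcoe : ∀ ρ : ℝ, R ρ = r ρ := fun _ => rfl
  have hγR : γ = polarCurve s R ∘ (↑) := by
    ext1 ρ
    simp [hγ, polarCurve, hRcoe]
  have hSR : S = polarRegion s R := by
    ext p
    rw [hS, polarRegion]
    constructor
    · rintro ⟨ρ, -, t, ht, htr, rfl⟩
      exact ⟨ρ, t, ht, htr, by simp⟩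
    · rintro ⟨θ, t, ht, htR, rfl⟩
      obtain ⟨ρ, hρ, rfl⟩ : θ ∈ ((↑) : ℝ → Angle) '' Ico 0 (2 * π) :=
        coe_image_Ico ▸ mem_univ θ
      exact ⟨ρ, hρ, t, ht, htR, by simp⟩
  refine ⟨hγR ▸ (polarCurve_injective hRpos).comp_injOn injOn_coe_Ico, ?_,
    hSR ▸ starConvex_polarRegion s R⟩
  rw [hγR, image_comp, coe_image_Ico, image_univ, hSR, frontier_polarRegion hR hRpos]
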